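/- arXiv:2306.13437 — 2 statements merged into one kernel-verified Lean document; each statement's English description precedes it below -/
import Mathlib

section
/- Let F be a free group and let A, A' be free factors of F of rank 2. If A ∩ A' has finite index in both A and A', then A = A'. -/
set_option linter.unusedSectionVars false

namespace Statement10Aux

open FreeGroup List

variable {α : Type*}

/-- No-cancellation relation on letters of a word in a free group:
`RR a b` means `b` is not the inverse of `a`. -/
def RR : (α × Bool) → (α × Bool) → Prop := fun a b => ¬(a.1 = b.1 ∧ a.2 = !b.2)

lemma not_rr_inv_self (a : α × Bool) : ¬ RR (a.1, !a.2) a := by simp [RR]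

lemma not_rr_self_inv (a : α × Bool) : ¬ RR a (a.1, !a.2) := by simp [RR]

variable [DecidableEq α]

lemma reduce_eq_self_of_chain' : ∀ {w : List (α × Bool)}, List.Chain' RR w → reduce w = w
  | [], _ => rfl
  | x :: t, h => by
    have ht : reduce t = t := reduce_eq_self_of_chain' h.tail
    rw [reduce.cons, ht]
    cases t with
    | nil => rfl
    | cons hd tl =>
      have hr : RR x hd := (List.isChain_cons_cons.1 h).1
      simp only [RR] at hr
      simp [if_neg hr]

lemma chain'_reduce : ∀ (w : List (α × Bool)), List.Chain' RR (reduce w)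
  | [] => List.isChain_nil
  | x :: t => by
    have ih := chain'_reduce t
    rw [reduce.cons]
    cases h : reduce t with
    | nil => exact List.isChain_singleton x
    | cons hd tl =>
      rw [h] at ih
      show List.Chain' RR (if x.1 = hd.1 ∧ x.2 = !hd.2 then tl else x :: hd :: tl)
      by_cases hc : x.1 = hd.1 ∧ x.2 = !hd.2
      · rw [if_pos hc]; exact ih.tail
      · simp only [if_neg hc]
        exact List.isChain_cons_cons.2 ⟨hc, ih⟩

lemma chain'_toWord (x : FreeGroup α) : List.Chain' RR x.toWord := by
  rw [← FreeGroup.mk_toWord (x := x), FreeGroup.toWord_mk]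
  exact chain'_reduce _

lemma invRev_append (u v : List (α × Bool)) :
    invRev (u ++ v) = invRev v ++ invRev u := by
  simp [invRev]

lemma head?_invRev (u : List (α × Bool)) :
    (invRev u).head? = u.getLast?.map (fun a => (a.1, !a.2)) := by
  simp [invRev, List.head?_reverse, List.getLast?_map]

lemma getLast?_invRev (u : List (α × Bool)) :
    (invRev u).getLast? = u.head?.map (fun a => (a.1, !a.2)) := by
  simp [invRev, List.getLast?_reverse, List.head?_map]

lemma invRev_ne_nil {u : List (α × Bool)} (hu : u ≠ []) : invRev u ≠ [] := by
  intro h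
  apply hu
  have := congrArg List.length h
  simpa [FreeGroup.invRev_length] using List.length_eq_zero_iff.1 (by simpa [invRev_length] using this)

/-- `lpow c n` is the word `c` concatenated with itself `n` times. -/
def lpow (c : List (α × Bool)) : ℕ → List (α × Bool)
  | 0 => []
  | n + 1 => c ++ lpow c n

lemma mk_lpow (c : List (α × Bool)) : ∀ n : ℕ, FreeGroup.mk (lpow c n) = (FreeGroup.mk c) ^ n
  | 0 => by simp [lpow]; rfl
  | n + 1 => by
    rw [lpow, ← FreeGroup.mul_mk, mk_lpow c n, pow_succ']

lemma lpow_ne_nil {c : List (α × Bool)} (hc : c ≠ []) {n : ℕ} (hn : n ≠ 0) :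
    lpow c n ≠ [] := by
  cases n with
  | zero => exact absurd rfl hn
  | succ n => simp [lpow, hc]

lemma length_lpow (c : List (α × Bool)) : ∀ n : ℕ, (lpow c n).length = n * c.length
  | 0 => by simp [lpow]
  | n + 1 => by simp [lpow, length_lpow c n]; ring

lemma lpow_nil : ∀ n : ℕ, lpow ([] : List (α × Bool)) n = []
  | 0 => rfl
  | n + 1 => by rw [lpow, List.nil_append, lpow_nil n]

lemma head?_lpow {c : List (α × Bool)} (hc : c ≠ []) {n : ℕ} (hn : n ≠ 0) :
    (lpow c n).head? = c.head? := by
  cases n with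
  | zero => exact absurd rfl hn
  | succ n => cases c with
    | nil => exact absurd rfl hc
    | cons a t => simp [lpow]

lemma getLast?_lpow {c : List (α × Bool)} (hc : c ≠ []) :
    ∀ {n : ℕ}, n ≠ 0 → (lpow c n).getLast? = c.getLast? := by
  intro n
  induction n with
  | zero => exact fun h => absurd rfl h
  | succ n ih =>
    intro _
    cases Nat.eq_zero_or_pos n with
    | inl h0 => subst h0; simp [lpow]
    | inr hpos =>
      rw [lpow, List.getLast?_append_of_ne_nil _ (lpow_ne_nil hc hpos.ne')]
      exact ih hpos.ne'

/-- cyclically-reduced condition on a word -/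
def Cyc (c : List (α × Bool)) : Prop := ∀ a ∈ c.getLast?, ∀ b ∈ c.head?, RR a b

lemma chain'_lpow {c : List (α × Bool)} (hch : List.Chain' RR c) (hcyc : Cyc c) :
    ∀ n : ℕ, List.Chain' RR (lpow c n)
  | 0 => List.isChain_nil
  | n + 1 => by
    rw [lpow, List.Chain', List.isChain_append]
    refine ⟨hch, chain'_lpow hch hcyc n, ?_⟩
    intro a ha b hb
    cases n with
    | zero => simp [lpow] at hb
    | succ n =>
      rcases eq_or_ne c [] with rfl | hc
      · rw [lpow_nil] at hb; simp at hb
      · rw [head?_lpow hc (Nat.succ_ne_zero n)] at hb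
        exact hcyc a ha b hb

/-- every reduced word is `u ++ c ++ u⁻¹` with `c` cyclically reduced. -/
lemma exists_decomp_aux : ∀ (N : ℕ) (w : List (α × Bool)), w.length ≤ N →
    List.Chain' RR w → ∃ u c, w = u ++ c ++ invRev u ∧ Cyc c := by
  intro N
  induction N with
  | zero =>
    intro w hlen _
    have : w = [] := List.eq_nil_of_length_eq_zero (Nat.le_zero.1 hlen)
    subst this
    exact ⟨[], [], by simp [invRev], by intro a ha; simp at ha⟩
  | succ N ih =>
  intro w hlen hw
  by_cases hcyc : Cyc w
  · exact ⟨[], w, by simp [invRev], hcyc⟩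
  · -- w is nonempty and its last letter is inverse of its first letter
    rcases w with _ | ⟨a, t⟩
    · exact absurd (by intro x hx; simp at hx) hcyc
    rcases eq_or_ne t [] with rfl | ht
    · refine absurd ?_ hcyc
      intro x hx b hb
      simp at hx hb
      subst hx; subst hb
      simp [RR]
    obtain ⟨m, b, rfl⟩ : ∃ m b, t = m ++ [b] := ⟨t.dropLast, t.getLast ht, (List.dropLast_append_getLast ht).symm⟩
    -- identify first/last letters
    have hlast : (a :: (m ++ [b])).getLast? = some b := by
      rw [show a :: (m ++ [b]) = (a :: m) ++ [b] from rfl, List.getLast?_concat]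
    have hhead : (a :: (m ++ [b])).head? = some a := rfl
    have hb : b = (a.1, !a.2) := by
      by_contra hne
      refine absurd ?_ hcyc
      intro x hx y hy
      rw [hlast] at hx; rw [hhead] at hy
      simp at hx hy
      subst hx; subst hy
      intro ⟨h1, h2⟩
      exact hne (Prod.ext h1 (by simp [h2]))
    have hm : List.Chain' RR m := hw.infix ⟨[a], [b], by simp⟩
    obtain ⟨u, c, hdec, hcyc'⟩ := ih m (by simp at hlen; omega) hm
    refine ⟨a :: u, c, ?_, hcyc'⟩
    have : invRev (a :: u) = invRev u ++ [b] := by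
      rw [show a :: u = [a] ++ u from rfl, invRev_append]
      simp [invRev, hb]
    rw [this, hdec]
    simp

lemma exists_decomp (w : List (α × Bool)) (hw : List.Chain' RR w) :
    ∃ u c, w = u ++ c ++ invRev u ∧ Cyc c :=
  exists_decomp_aux w.length w le_rfl hw

lemma toWord_conj_pow {u c : List (α × Bool)} (h : List.Chain' RR (u ++ c ++ invRev u))
    (hcyc : Cyc c) (hc : c ≠ []) {n : ℕ} (hn : n ≠ 0) :
    ((FreeGroup.mk (u ++ c ++ invRev u)) ^ n).toWord = u ++ lpow c n ++ invRev u := by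
  have hconj : ∀ (x y : FreeGroup α) (m : ℕ), (x * y * x⁻¹) ^ m = x * y ^ m * x⁻¹ := by
    intro x y m
    induction m with
    | zero => simp
    | succ m ihm => rw [pow_succ, pow_succ, ihm]; group
  have hgrp : (FreeGroup.mk (u ++ c ++ invRev u)) ^ n
      = FreeGroup.mk (u ++ lpow c n ++ invRev u) := by
    have h1 : FreeGroup.mk (u ++ c ++ invRev u)
        = FreeGroup.mk u * FreeGroup.mk c * (FreeGroup.mk u)⁻¹ := by
      rw [FreeGroup.inv_mk, FreeGroup.mul_mk, FreeGroup.mul_mk]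
    rw [h1, hconj, ← mk_lpow, FreeGroup.inv_mk, FreeGroup.mul_mk, FreeGroup.mul_mk]
  rw [hgrp, FreeGroup.toWord_mk]
  apply reduce_eq_self_of_chain'
  -- unpack the chain condition on `u ++ c ++ invRev u`
  obtain ⟨huc, hiu, J1⟩ := List.isChain_append.1 h
  obtain ⟨hu, hcch, J2⟩ := List.isChain_append.1 huc
  rw [List.Chain', List.isChain_append]
  refine ⟨List.isChain_append.2 ⟨hu, chain'_lpow hcch hcyc n, ?_⟩, hiu, ?_⟩
  · intro x hx y hy
    rw [head?_lpow hc hn] at hy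
    exact J2 x hx y hy
  · intro x hx y hy
    refine J1 x ?_ y hy
    rw [List.getLast?_append_of_ne_nil _ (lpow_ne_nil hc hn)] at hx
    rw [getLast?_lpow hc hn] at hx
    rw [List.getLast?_append_of_ne_nil _ hc]
    exact hx

lemma eq_one_of_c_nil {x : FreeGroup α} {u : List (α × Bool)}
    (hx : x.toWord = u ++ [] ++ invRev u) : x = 1 := by
  have hch : List.Chain' RR (u ++ invRev u) := by
    have := chain'_toWord x
    rwa [hx, List.append_nil] at this
  have hu : u = [] := by
    rcases eq_or_ne u [] with h | h
    · exact h
    · obtain ⟨a, ha⟩ := List.getLast?_isSome.2 h |> Option.isSome_iff_exists.1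
      obtain ⟨-, -, J⟩ := List.isChain_append.1 hch
      have hy : (invRev u).head? = some (a.1, !a.2) := by
        rw [head?_invRev, ha]; rfl
      exact absurd (J a ha _ hy) (not_rr_self_inv a)
  rw [← FreeGroup.toWord_eq_nil_iff, hx, hu]
  simp [invRev]

/-- The core comparison: equal reduced words for `x^n` and `y^n` force equal data. -/
lemma core {n : ℕ} (hn : n ≠ 0) {u c v d : List (α × Bool)}
    (hcyc : Cyc c) (hc : c ≠ []) (hdcyc : Cyc d) (hd : d ≠ [])
    (hlen : u.length ≤ v.length)
    (heq : u ++ lpow c n ++ invRev u = v ++ lpow d n ++ invRev v) :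
    u ++ c ++ invRev u = v ++ d ++ invRev v := by
  -- u is a prefix of v
  obtain ⟨p, rfl⟩ : u <+: v := by
    refine List.prefix_of_prefix_length_le (l₃ := u ++ lpow c n ++ invRev u) ?_ ?_ hlen
    · exact ⟨lpow c n ++ invRev u, by simp⟩
    · rw [heq]; exact ⟨lpow d n ++ invRev v, by simp⟩
  rw [invRev_append] at heq
  simp only [List.append_assoc] at heq
  have heq2 : lpow c n = p ++ lpow d n ++ invRev p := by
    have h1 : lpow c n ++ invRev u = (p ++ lpow d n ++ invRev p) ++ invRev u := by
      have := List.append_cancel_left heq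
      simpa [List.append_assoc] using this
    exact List.append_cancel_right h1
  have hp : p = [] := by
    by_contra hpne
    obtain ⟨a, ha⟩ := Option.isSome_iff_exists.1 (List.isSome_head?.2 hpne)
    -- head of both sides
    have hhead : c.head? = some a := by
      have := congrArg List.head? heq2
      rw [head?_lpow hc hn] at this
      rw [this]
      rcases p with _ | ⟨b, q⟩
      · exact absurd rfl hpne
      · simp at ha ⊢; exact ha.symm ▸ rfl
    -- last of both sides
    have hlast : c.getLast? = some (a.1, !a.2) := by
      have := congrArg List.getLast? heq2
      rw [getLast?_lpow hc hn] at this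
      rw [this, List.getLast?_append_of_ne_nil _ (invRev_ne_nil hpne),
        getLast?_invRev, ha]
      rfl
    exact absurd (hcyc _ hlast _ hhead) (not_rr_inv_self a)
  subst hp
  simp only [invRev, List.map_nil, List.reverse_nil, List.nil_append, List.append_nil] at heq2 ⊢
  have hlcd : c.length = d.length := by
    have := congrArg List.length heq2
    rw [length_lpow, length_lpow] at this
    exact Nat.eq_of_mul_eq_mul_left (Nat.pos_of_ne_zero hn) this
  obtain ⟨m, rfl⟩ := Nat.exists_eq_succ_of_ne_zero hn
  have hcd : c = d := by
    have h1 : c = (lpow c (m + 1)).take c.length := by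
      rw [lpow, List.take_left]
    have h2 : d = (lpow d (m + 1)).take d.length := by
      rw [lpow, List.take_left]
    rw [h1, h2, heq2, hlcd]
  rw [hcd]

/-- **Unique roots in a free group**: `x ^ n = y ^ n` with `n ≠ 0` implies `x = y`. -/
lemma pow_left_injective {n : ℕ} (hn : n ≠ 0) {x y : FreeGroup α}
    (h : x ^ n = y ^ n) : x = y := by
  obtain ⟨u, c, hx, hcyc⟩ := exists_decomp x.toWord (chain'_toWord x)
  obtain ⟨v, d, hy, hdcyc⟩ := exists_decomp y.toWord (chain'_toWord y)
  have hx' : x = FreeGroup.mk (u ++ c ++ invRev u) := by rw [← hx, FreeGroup.mk_toWord]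
  have hy' : y = FreeGroup.mk (v ++ d ++ invRev v) := by rw [← hy, FreeGroup.mk_toWord]
  rcases eq_or_ne c [] with rfl | hc
  · -- x = 1
    have hx1 : x = 1 := eq_one_of_c_nil hx
    subst hx1
    rcases eq_or_ne d [] with rfl | hd
    · exact (eq_one_of_c_nil hy).symm
    · exfalso
      have h1 : (y ^ n).toWord = v ++ lpow d n ++ invRev v := by
        rw [hy'] at h ⊢
        rw [toWord_conj_pow (hy ▸ chain'_toWord y) hdcyc hd hn]
      rw [← h, one_pow, FreeGroup.toWord_one] at h1
      exact lpow_ne_nil hd hn (by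
        rcases List.append_eq_nil_iff.1 (List.append_eq_nil_iff.1 h1.symm).1 with ⟨-, h2⟩
        exact h2)
  rcases eq_or_ne d [] with rfl | hd
  · -- y = 1, symmetric
    have hy1 : y = 1 := eq_one_of_c_nil hy
    subst hy1
    exfalso
    have h1 : (x ^ n).toWord = u ++ lpow c n ++ invRev u := by
      rw [hx'] at h ⊢
      rw [toWord_conj_pow (hx ▸ chain'_toWord x) hcyc hc hn]
    rw [h, one_pow, FreeGroup.toWord_one] at h1
    exact lpow_ne_nil hc hn (by
      rcases List.append_eq_nil_iff.1 (List.append_eq_nil_iff.1 h1.symm).1 with ⟨-, h2⟩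
      exact h2)
  -- main case
  have heq : u ++ lpow c n ++ invRev u = v ++ lpow d n ++ invRev v := by
    rw [← toWord_conj_pow (hx ▸ chain'_toWord x) hcyc hc hn,
      ← toWord_conj_pow (hy ▸ chain'_toWord y) hdcyc hd hn, ← hx', ← hy', h]
  have hwords : u ++ c ++ invRev u = v ++ d ++ invRev v := by
    rcases le_total u.length v.length with hle | hle
    · exact core hn hcyc hc hdcyc hd hle heq
    · exact (core hn hdcyc hd hcyc hc hle heq.symm).symm
  rw [hx', hy', hwords]

end Statement10Aux


/-- A subgroup `A` of a group `F` is a *free factor* if `F` decomposes as an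
internal free product `F = A * B` for some subgroup `B`, i.e. the natural map
from the coproduct `A ∗ B` to `F` is an isomorphism. -/
def IsFreeFactor {F : Type*} [Group F] (A : Subgroup F) : Prop :=
  ∃ B : Subgroup F, Function.Bijective (Monoid.Coprod.lift A.subtype B.subtype)

/-- `A` has rank `n`: it is isomorphic to the free group on `n` generators. -/
def HasRank {F : Type*} [Group F] (A : Subgroup F) (n : ℕ) : Prop :=
  Nonempty (A ≃* FreeGroup (Fin n))

namespace Statement10Aux

/-- A free factor is a retract. -/
lemma exists_retraction {F : Type*} [Group F] {A : Subgroup F} (hA : IsFreeFactor A) :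
    ∃ r : F →* F, (∀ x, r x ∈ A) ∧ ∀ a ∈ A, r a = a := by
  obtain ⟨B, hbij⟩ := hA
  let e := MulEquiv.ofBijective _ hbij
  refine ⟨A.subtype.comp ((Monoid.Coprod.fst).comp e.symm.toMonoidHom),
    fun x => SetLike.coe_mem _, fun a ha => ?_⟩
  have he : e.symm a = Monoid.Coprod.inl ⟨a, ha⟩ := by
    apply e.injective
    rw [MulEquiv.apply_symm_apply]
    show a = Monoid.Coprod.lift A.subtype B.subtype (Monoid.Coprod.inl ⟨a, ha⟩)
    rw [Monoid.Coprod.lift_apply_inl]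
    rfl
  show A.subtype (Monoid.Coprod.fst (e.symm a)) = a
  rw [he, Monoid.Coprod.fst_apply_inl]
  rfl

lemma le_of_relindex_ne_zero {α : Type*} {A A' : Subgroup (FreeGroup α)}
    (hA : IsFreeFactor A) (hfi : (A ⊓ A').relIndex A' ≠ 0) : A' ≤ A := by
  classical
  obtain ⟨r, hr1, hr2⟩ := exists_retraction hA
  intro g hg
  obtain ⟨k, hk, -, hgk⟩ := Subgroup.exists_pow_mem_of_relIndex_ne_zero hfi hg
  have hgA : g ^ k ∈ A := hgk.1.1
  have hpow : (r g) ^ k = g ^ k := by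
    rw [← map_pow, hr2 _ hgA]
  have := pow_left_injective hk.ne' hpow
  rw [← this]
  exact hr1 g

end Statement10Aux

/-- If `A` and `A'` are rank-2 free factors of a free group and
`A ∩ A'` has finite index in both `A` and `A'`, then `A = A'`. -/
theorem statement10 {α : Type*} (A A' : Subgroup (FreeGroup α))
    (hA : IsFreeFactor A) (hA' : IsFreeFactor A')
    (hA2 : HasRank A 2) (hA'2 : HasRank A' 2)
    (hfiA : (A ⊓ A').relIndex A ≠ 0) (hfiA' : (A ⊓ A').relIndex A' ≠ 0) :
    A = A' := by
  have hfiA2 : (A' ⊓ A).relIndex A ≠ 0 := by rwa [inf_comm] at hfiA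
  exact le_antisymm (Statement10Aux.le_of_relindex_ne_zero hA' hfiA2)
    (Statement10Aux.le_of_relindex_ne_zero hA hfiA')
end

section
/- Let F₃ be the free group with basis {x₁, x₂, x₃}. Suppose Λ is a hexagonal configuration of free factors of a free group F: rank-1 factors ⟨x₁⟩, ⟨x₂⟩, ⟨x₃⟩ generated by elements x₁, x₂, x₃ of F, and rank-2 factors X₁, X₂, X₃ with ⟨x_i⟩ ≤ X_j for i ≠ j, such that ⟨x₁⟩ * X₁ is a free factor of F of rank 3 and each ⟨x_i, x_j⟩ (i ≠ j) is a free factor of rank 2 contained in the appropriate X_k. Then X₃ = ⟨x₁, x₂⟩, X₁ = ⟨x₂, x₃⟩, X₂ = ⟨x₁, x₃⟩, and ⟨x₁, x₂, x₃⟩ is a free factor of F of rank 3 with basis {x₁,x₂,x₃}. -/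
namespace St14Aux

variable {α : Type*} [DecidableEq α]

/-- No cancellable adjacent pair in a list (reduced word condition we use). -/
def NoCan {α : Type*} (L : List (α × Bool)) : Prop :=
  ∀ (i : ℕ) (a : α) (b : Bool), L[i]? = some (a, b) → L[i+1]? = some (a, !b) → False

lemma noCan_toWord {α : Type*} [DecidableEq α] (w : FreeGroup α) : NoCan w.toWord := by
  intro i a b h1 h2
  have hi : i < w.toWord.length := (List.getElem?_eq_some_iff.mp h1).1
  have hi2 : i + 1 < w.toWord.length := (List.getElem?_eq_some_iff.mp h2).1
  have e1 : w.toWord[i] = (a, b) := by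
    have := List.getElem?_eq_getElem hi
    rw [h1] at this; exact (Option.some_injective _ this.symm)
  have e2 : w.toWord[i+1] = (a, !b) := by
    have := List.getElem?_eq_getElem hi2
    rw [h2] at this; exact (Option.some_injective _ this.symm)
  have hdecomp : w.toWord = w.toWord.take i ++ (a, b) :: (a, !b) :: w.toWord.drop (i+2) := by
    conv_lhs => rw [← List.take_append_drop i w.toWord]
    rw [List.drop_eq_getElem_cons hi, e1, List.drop_eq_getElem_cons hi2, e2]
  exact FreeGroup.reduce.not ((FreeGroup.reduce_toWord w).trans hdecomp)

/-- The partial bijection associated to a generator `a`, as an equiv of subtypes. -/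
def sigmaE (L : List (α × Bool)) (hL : NoCan L) (a : α) :
    {j : Fin (L.length + 1) //
        ((j : ℕ) ≠ 0 ∧ L[(j : ℕ) - 1]? = some (a, true)) ∨ L[(j : ℕ)]? = some (a, false)} ≃
    {j : Fin (L.length + 1) //
        L[(j : ℕ)]? = some (a, true) ∨ ((j : ℕ) ≠ 0 ∧ L[(j : ℕ) - 1]? = some (a, false))} where
  toFun x :=
    if h : ((x.1 : ℕ) ≠ 0 ∧ L[(x.1 : ℕ) - 1]? = some (a, true)) then
      ⟨⟨(x.1 : ℕ) - 1, by have := x.1.isLt; omega⟩, Or.inl h.2⟩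
    else
      have h2 : L[(x.1 : ℕ)]? = some (a, false) := x.2.resolve_left h
      ⟨⟨(x.1 : ℕ) + 1, by have := (List.getElem?_eq_some_iff.mp h2).1; omega⟩,
        Or.inr ⟨Nat.succ_ne_zero _, by simpa using h2⟩⟩
  invFun x :=
    if h : L[(x.1 : ℕ)]? = some (a, true) then
      ⟨⟨(x.1 : ℕ) + 1, by have := (List.getElem?_eq_some_iff.mp h).1; omega⟩,
        Or.inl ⟨Nat.succ_ne_zero _, by simpa using h⟩⟩
    else
      have h2 : (x.1 : ℕ) ≠ 0 ∧ L[(x.1 : ℕ) - 1]? = some (a, false) := x.2.resolve_left h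
      ⟨⟨(x.1 : ℕ) - 1, by have := x.1.isLt; omega⟩, Or.inr h2.2⟩
  left_inv := by
    intro x
    dsimp only []
    by_cases h : ((x.1 : ℕ) ≠ 0 ∧ L[(x.1 : ℕ) - 1]? = some (a, true))
    · rw [dif_pos h]
      dsimp only []
      rw [dif_pos h.2]
      apply Subtype.ext; apply Fin.ext
      have := h.1
      simp only []
      omega
    · rw [dif_neg h]
      have h2 : L[(x.1 : ℕ)]? = some (a, false) := x.2.resolve_left h
      dsimp only []
      have hne : ¬ L[((x.1 : ℕ) + 1 : ℕ)]? = some (a, true) := fun hcon =>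
        hL (x.1 : ℕ) a false h2 hcon
      rw [dif_neg hne]
      apply Subtype.ext; apply Fin.ext
      simp only []
      omega
  right_inv := by
    intro x
    dsimp only []
    by_cases h : L[(x.1 : ℕ)]? = some (a, true)
    · rw [dif_pos h]
      dsimp only []
      rw [dif_pos ⟨Nat.succ_ne_zero _, by simpa using h⟩]
      apply Subtype.ext; apply Fin.ext
      simp only []
      omega
    · rw [dif_neg h]
      have h2 : (x.1 : ℕ) ≠ 0 ∧ L[(x.1 : ℕ) - 1]? = some (a, false) := x.2.resolve_left h
      dsimp only []
      have hne : ¬ (((x.1 : ℕ) - 1 : ℕ) ≠ 0 ∧ L[((x.1 : ℕ) - 1 : ℕ) - 1]? = some (a, true)) := by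
        rintro ⟨hz, hcon⟩
        refine hL ((x.1 : ℕ) - 1 - 1) a true hcon ?_
        have : (x.1 : ℕ) - 1 - 1 + 1 = (x.1 : ℕ) - 1 := by omega
        rw [this]
        simpa using h2.2
      rw [dif_neg hne]
      apply Subtype.ext; apply Fin.ext
      have := h2.1
      simp only []
      omega

/-- The permutation of `Fin (L.length + 1)` associated to a generator. -/
noncomputable def sigmaPerm (L : List (α × Bool)) (hL : NoCan L) (a : α) :
    Equiv.Perm (Fin (L.length + 1)) :=
  (sigmaE L hL a).extendSubtype

lemma sigmaPerm_true (L : List (α × Bool)) (hL : NoCan L) (a : α) {i : ℕ}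
    (hia : L[i]? = some (a, true)) (hi : i + 1 < L.length + 1) :
    sigmaPerm L hL a ⟨i + 1, hi⟩ = ⟨i, by omega⟩ := by
  have hp : ((⟨i+1, hi⟩ : Fin (L.length + 1)) : ℕ) ≠ 0 ∧
      L[((⟨i+1, hi⟩ : Fin (L.length + 1)) : ℕ) - 1]? = some (a, true) :=
    ⟨Nat.succ_ne_zero _, by simpa using hia⟩
  rw [sigmaPerm, Equiv.extendSubtype_apply_of_mem (sigmaE L hL a) _ (Or.inl hp)]
  show ((sigmaE L hL a) ⟨⟨i+1, hi⟩, Or.inl hp⟩ : Fin (L.length + 1)) = _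
  rw [sigmaE]
  simp only [Equiv.coe_fn_mk]
  rw [dif_pos hp]
  apply Fin.ext
  simp only []
  omega

lemma sigmaPerm_false (L : List (α × Bool)) (hL : NoCan L) (a : α) {i : ℕ}
    (hia : L[i]? = some (a, false)) (hi : i < L.length + 1) (hi2 : i + 1 < L.length + 1) :
    sigmaPerm L hL a ⟨i, hi⟩ = ⟨i + 1, hi2⟩ := by
  have hp : L[((⟨i, hi⟩ : Fin (L.length + 1)) : ℕ)]? = some (a, false) := by simpa using hia
  rw [sigmaPerm, Equiv.extendSubtype_apply_of_mem (sigmaE L hL a) _ (Or.inr hp)]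
  show ((sigmaE L hL a) ⟨⟨i, hi⟩, Or.inr hp⟩ : Fin (L.length + 1)) = _
  rw [sigmaE]
  simp only [Equiv.coe_fn_mk]
  have hne : ¬ (((⟨i, hi⟩ : Fin (L.length + 1)) : ℕ) ≠ 0 ∧
      L[((⟨i, hi⟩ : Fin (L.length + 1)) : ℕ) - 1]? = some (a, true)) := by
    rintro ⟨hz, hcon⟩
    refine hL (i - 1) a true (by simpa using hcon) ?_
    have : i - 1 + 1 = i := by simp at hz; omega
    rw [this]; exact hia
  rw [dif_neg hne]

/-- Free groups are residually finite (in the form we need). -/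
lemma exists_perm_hom (w : FreeGroup α) (hw : w ≠ 1) :
    ∃ (m : ℕ) (f : α → Equiv.Perm (Fin m)), FreeGroup.lift f w ≠ 1 := by
  set L := w.toWord with hLdef
  have hL : NoCan L := noCan_toWord w
  set k := L.length with hkdef
  have hk1 : 1 ≤ k := by
    rcases Nat.eq_zero_or_pos k with h | h
    · exact absurd (FreeGroup.toWord_eq_nil_iff.mp (List.length_eq_zero_iff.mp h)) hw
    · exact h
  set f : α → Equiv.Perm (Fin (k + 1)) := sigmaPerm L hL with hfdef
  set F : α × Bool → Equiv.Perm (Fin (k + 1)) := fun x => cond x.2 (f x.1) (f x.1)⁻¹ with hFdef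
  have key : ∀ (d j : ℕ) (hj : j ≤ k), k - j = d →
      (((L.drop j).map F).prod) ⟨k, by omega⟩ = ⟨j, by omega⟩ := by
    intro d
    induction d with
    | zero =>
      intro j hj hd
      have : j = k := by omega
      subst this
      rw [List.drop_length]
      simp
    | succ d ih =>
      intro j hj hd
      have hjk : j < k := by omega
      have hdrop : L.drop j = L[j] :: L.drop (j + 1) := List.drop_eq_getElem_cons (by omega)
      rw [hdrop, List.map_cons, List.prod_cons, Equiv.Perm.mul_apply,
        ih (j + 1) (by omega) (by omega)]
      have hget : L[j]? = some L[j] := List.getElem?_eq_getElem (by omega)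
      rcases hLj : L[j]'(by omega) with ⟨a, b⟩
      rw [hLj] at hget
      cases b with
      | true =>
        show F (a, true) _ = _
        rw [hFdef]
        simpa using sigmaPerm_true L hL a hget (by omega)
      | false =>
        show F (a, false) _ = _
        rw [hFdef]
        simp only [cond_false]
        rw [Equiv.Perm.inv_def, Equiv.symm_apply_eq]
        exact (sigmaPerm_false L hL a hget (by omega) (by omega)).symm
  refine ⟨k + 1, f, fun hcon => ?_⟩
  have hw' : w = FreeGroup.mk L := (FreeGroup.mk_toWord).symm
  have : FreeGroup.lift f w = (L.map F).prod := by
    rw [hw', FreeGroup.lift_mk]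
  have h0 := key k 0 (by omega) (by omega)
  rw [List.drop_zero] at h0
  rw [← this, hcon] at h0
  simp only [Equiv.Perm.one_apply] at h0
  have : k = 0 := by simpa using (Fin.mk.injEq .. ▸ h0)
  omega

/-- Finitely generated free groups are Hopfian. -/
lemma freeGroup_hopfian {n : ℕ} (φ : FreeGroup (Fin n) →* FreeGroup (Fin n))
    (hφ : Function.Surjective φ) : Function.Injective φ := by
  rw [injective_iff_map_eq_one]
  intro w hw
  by_contra hne
  obtain ⟨m, f, hf⟩ := exists_perm_hom w hne
  haveI : Finite (FreeGroup (Fin n) →* Equiv.Perm (Fin m)) :=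
    Finite.of_equiv (Fin n → Equiv.Perm (Fin m)) FreeGroup.lift
  have hTinj : Function.Injective
      (fun g : FreeGroup (Fin n) →* Equiv.Perm (Fin m) => g.comp φ) := by
    intro g₁ g₂ h
    refine MonoidHom.ext fun x => ?_
    obtain ⟨y, rfl⟩ := hφ x
    exact DFunLike.congr_fun h y
  obtain ⟨g, hg⟩ := Finite.surjective_of_injective hTinj (FreeGroup.lift f)
  have : FreeGroup.lift f w = 1 := by
    rw [← hg]
    show g (φ w) = 1
    rw [hw, map_one]
  exact hf this

/-- Transport Hopficity along isomorphisms: a surjection between groups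
isomorphic to the same finitely generated free group is injective. -/
lemma inj_of_surj_of_iso {G H : Type*} [Group G] [Group H] {n : ℕ}
    (eG : G ≃* FreeGroup (Fin n)) (eH : H ≃* FreeGroup (Fin n))
    (ψ : G →* H) (hs : Function.Surjective ψ) : Function.Injective ψ := by
  set χ : FreeGroup (Fin n) →* FreeGroup (Fin n) :=
    (eH.toMonoidHom.comp ψ).comp eG.symm.toMonoidHom with hχ
  have hχs : Function.Surjective χ :=
    eH.surjective.comp (hs.comp eG.symm.surjective)
  have hχi := freeGroup_hopfian χ hχs
  intro x y hxy
  have : χ (eG x) = χ (eG y) := by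
    simp only [hχ, MonoidHom.comp_apply, MulEquiv.coe_toMonoidHom, MulEquiv.symm_apply_apply]
    rw [hxy]
  exact eG.injective (hχi this)

/-- A free factor admits a retraction. -/
lemma exists_retraction {F : Type*} [Group F] {B : Subgroup F} (h : IsFreeFactor B) :
    ∃ r : F →* B, ∀ b : B, r (b : F) = b := by
  obtain ⟨C, hbij⟩ := h
  let φ := MulEquiv.ofBijective (Monoid.Coprod.lift B.subtype C.subtype) hbij
  refine ⟨(Monoid.Coprod.lift (MonoidHom.id B) 1).comp φ.symm.toMonoidHom, fun b => ?_⟩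
  have h1 : φ (Monoid.Coprod.inl b) = (b : F) := by
    show Monoid.Coprod.lift B.subtype C.subtype (Monoid.Coprod.inl b) = (b : F)
    rw [Monoid.Coprod.lift_apply_inl]
    rfl
  have h2 : φ.symm (b : F) = Monoid.Coprod.inl b := by
    rw [← h1, MulEquiv.symm_apply_apply]
  show Monoid.Coprod.lift (MonoidHom.id B) 1 (φ.symm (b : F)) = b
  rw [h2, Monoid.Coprod.lift_apply_inl]
  rfl

/-- A free factor of the same rank contained in another free factor subgroup
isomorphic to the same f.g. free group is equal to it. -/
lemma eq_of_le_of_rank {F : Type*} [Group F] {B X : Subgroup F} {n : ℕ}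
    (hB : IsFreeFactor B) (rB : HasRank B n) (rX : HasRank X n) (hle : B ≤ X) : B = X := by
  obtain ⟨r, hr⟩ := exists_retraction hB
  obtain ⟨eB⟩ := rB
  obtain ⟨eX⟩ := rX
  set s : X →* B := r.comp X.subtype with hs
  have hss : Function.Surjective s := by
    intro b
    exact ⟨⟨(b : F), hle b.2⟩, hr b⟩
  have hsi : Function.Injective s := inj_of_surj_of_iso eX eB s hss
  refine le_antisymm hle fun x hx => ?_
  -- s (inclusion (s ⟨x, hx⟩)) = s ⟨x, hx⟩ since s fixes B
  have hfix : s (Subgroup.inclusion hle (s ⟨x, hx⟩)) = s ⟨x, hx⟩ := by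
    show r ((s ⟨x, hx⟩ : B) : F) = s ⟨x, hx⟩
    exact hr _
  have := hsi hfix
  have hxval : ((s ⟨x, hx⟩ : B) : F) = x := congrArg Subtype.val this
  rw [← hxval]
  exact (s ⟨x, hx⟩).2

end St14Aux

open St14Aux in
/-- (Hexagonal configuration / base case of the
characterisation of standard apartments.)  Given elements `x₁, x₂, x₃` of a free
group `F` and rank-2 free factors `X₁, X₂, X₃` with `xᵢ ∈ X_j` for `i ≠ j`, such
that `⟨x₁⟩ * X₁` is a free factor of rank 3 and each `⟨xᵢ, x_j⟩` (`i ≠ j`) is a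
rank-2 free factor contained in the opposite `X_k`, we have
`X₃ = ⟨x₁,x₂⟩`, `X₁ = ⟨x₂,x₃⟩`, `X₂ = ⟨x₁,x₃⟩`, and `⟨x₁,x₂,x₃⟩` is a rank-3
free factor of `F` with basis `{x₁,x₂,x₃}`. -/
theorem statement14 {α : Type*} (x₁ x₂ x₃ : FreeGroup α)
    (X₁ X₂ X₃ : Subgroup (FreeGroup α))
    (hX₁ : IsFreeFactor X₁) (hX₂ : IsFreeFactor X₂) (hX₃ : IsFreeFactor X₃)
    (r₁ : HasRank X₁ 2) (r₂ : HasRank X₂ 2) (r₃ : HasRank X₃ 2)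
    (m12 : x₁ ∈ X₂) (m13 : x₁ ∈ X₃) (m21 : x₂ ∈ X₁) (m23 : x₂ ∈ X₃)
    (m31 : x₃ ∈ X₁) (m32 : x₃ ∈ X₂)
    (hant : IsFreeFactor (Subgroup.zpowers x₁ ⊔ X₁) ∧
      HasRank (Subgroup.zpowers x₁ ⊔ X₁) 3)
    (h12 : IsFreeFactor (Subgroup.closure {x₁, x₂}) ∧
      HasRank (Subgroup.closure {x₁, x₂}) 2 ∧ Subgroup.closure {x₁, x₂} ≤ X₃)
    (h23 : IsFreeFactor (Subgroup.closure {x₂, x₃}) ∧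
      HasRank (Subgroup.closure {x₂, x₃}) 2 ∧ Subgroup.closure {x₂, x₃} ≤ X₁)
    (h13 : IsFreeFactor (Subgroup.closure {x₁, x₃}) ∧
      HasRank (Subgroup.closure {x₁, x₃}) 2 ∧ Subgroup.closure {x₁, x₃} ≤ X₂) :
    X₃ = Subgroup.closure {x₁, x₂} ∧
    X₁ = Subgroup.closure {x₂, x₃} ∧
    X₂ = Subgroup.closure {x₁, x₃} ∧
    IsFreeFactor (Subgroup.closure {x₁, x₂, x₃}) ∧
    ∃ e : FreeGroup (Fin 3) ≃* ↥(Subgroup.closure {x₁, x₂, x₃}),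
      ((e (FreeGroup.of 0) : FreeGroup α) = x₁ ∧
       (e (FreeGroup.of 1) : FreeGroup α) = x₂ ∧
       (e (FreeGroup.of 2) : FreeGroup α) = x₃) := by
  have e3 : X₃ = Subgroup.closure {x₁, x₂} :=
    (eq_of_le_of_rank h12.1 h12.2.1 r₃ h12.2.2).symm
  have e1 : X₁ = Subgroup.closure {x₂, x₃} :=
    (eq_of_le_of_rank h23.1 h23.2.1 r₁ h23.2.2).symm
  have e2 : X₂ = Subgroup.closure {x₁, x₃} :=
    (eq_of_le_of_rank h13.1 h13.2.1 r₂ h13.2.2).symm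
  have hsup : Subgroup.zpowers x₁ ⊔ X₁ = Subgroup.closure {x₁, x₂, x₃} := by
    rw [e1, Subgroup.zpowers_eq_closure, ← Subgroup.closure_union]
    congr 1
  have hFF : IsFreeFactor (Subgroup.closure {x₁, x₂, x₃}) := hsup ▸ hant.1
  have hRank : HasRank (Subgroup.closure {x₁, x₂, x₃}) 3 := hsup ▸ hant.2
  refine ⟨e3, e1, e2, hFF, ?_⟩
  -- membership of the generators
  have hm1 : x₁ ∈ Subgroup.closure {x₁, x₂, x₃} :=
    Subgroup.subset_closure (by simp)
  have hm2 : x₂ ∈ Subgroup.closure {x₁, x₂, x₃} :=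
    Subgroup.subset_closure (by simp)
  have hm3 : x₃ ∈ Subgroup.closure {x₁, x₂, x₃} :=
    Subgroup.subset_closure (by simp)
  set S := Subgroup.closure {x₁, x₂, x₃} with hS
  set g : Fin 3 → S := ![⟨x₁, hm1⟩, ⟨x₂, hm2⟩, ⟨x₃, hm3⟩] with hg
  set f : FreeGroup (Fin 3) →* S := FreeGroup.lift g with hf
  have hfs : Function.Surjective f := by
    rintro ⟨y, hy⟩
    have : ∃ z : FreeGroup (Fin 3), ((f z : S) : FreeGroup α) = y := by
      refine Subgroup.closure_induction
        (p := fun y _ => ∃ z : FreeGroup (Fin 3), ((f z : S) : FreeGroup α) = y)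
        ?_ ?_ ?_ ?_ hy
      · intro x hx
        rcases hx with rfl | rfl | rfl
        · exact ⟨FreeGroup.of 0, by simp [hf, hg]⟩
        · exact ⟨FreeGroup.of 1, by simp [hf, hg]⟩
        · exact ⟨FreeGroup.of 2, by simp [hf, hg]⟩
      · exact ⟨1, by simp⟩
      · rintro x y _ _ ⟨z₁, hz₁⟩ ⟨z₂, hz₂⟩
        exact ⟨z₁ * z₂, by rw [map_mul]; push_cast; rw [hz₁, hz₂]⟩
      · rintro x _ ⟨z, hz⟩
        exact ⟨z⁻¹, by rw [map_inv]; push_cast; rw [hz]⟩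
    obtain ⟨z, hz⟩ := this
    exact ⟨z, Subtype.ext hz⟩
  obtain ⟨eS⟩ := hRank
  have hfi : Function.Injective f :=
    inj_of_surj_of_iso (MulEquiv.refl _) eS f hfs
  refine ⟨MulEquiv.ofBijective f ⟨hfi, hfs⟩, ?_, ?_, ?_⟩
  · show ((f (FreeGroup.of 0) : S) : FreeGroup α) = x₁
    simp [hf, hg]
  · show ((f (FreeGroup.of 1) : S) : FreeGroup α) = x₂
    simp [hf, hg]
  · show ((f (FreeGroup.of 2) : S) : FreeGroup α) = x₃
    simp [hf, hg]
end
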